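/- arXiv:1505.03314 — 3 statements merged into one kernel-verified Lean document; each statement's English description precedes it below -/
import Mathlib

section
/- Fourth-power formula (1): Let α > 0 and let g : ℝ → ℝ be continuous on [0,α]. Then (∫₀^α g(x) dx)⁴ = 24 · ∫₀¹ ∫₀¹ ∫₀¹ ∫₀^α δ³ · γ² · β · g(δ) · g(δ·γ) · g(δ·γ·β) · g(δ·γ·β·x) dδ dγ dβ dx. -/
/-!
Write `G t = ∫₀ᵗ g`. The substitution `t = c x` and the chain rule give
`∫₀¹ c g(c x) G(c x)ⁿ dx = ∫₀ᶜ g Gⁿ = G(c)ⁿ⁺¹ / (n + 1)`. After reversing the order of the four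
integrations (Fubini, once `g` is extended continuously beyond `[0, α]`), the `x`-, `β`-, `γ`- and
`δ`-integrals are this identity for `n = 0, 1, 2, 3` with `c = δγβ, δγ, δ` and finally `α`, so the
iterated integral equals `G(α)⁴ / (1 · 2 · 3 · 4)`.
-/

open Set MeasureTheory

theorem intervalIntegral_intervalIntegral_swap_of_continuous {F : ℝ → ℝ → ℝ}
    (hF : Continuous F.uncurry) (a b c d : ℝ) :
    ∫ x in a..b, ∫ y in c..d, F x y = ∫ y in c..d, ∫ x in a..b, F x y :=
  intervalIntegral_intervalIntegral_swap <|
    (hF.continuousOn.integrableOn_compact (isCompact_uIcc.prod isCompact_uIcc)).mono_set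
      (prod_mono uIoc_subset_uIcc uIoc_subset_uIcc)

theorem intervalIntegral_reverse_four {f : ℝ → ℝ → ℝ → ℝ → ℝ}
    (hf : Continuous fun p : ℝ × ℝ × ℝ × ℝ => f p.1 p.2.1 p.2.2.1 p.2.2.2)
    (a₁ b₁ a₂ b₂ a₃ b₃ a₄ b₄ : ℝ) :
    ∫ x in a₁..b₁, ∫ y in a₂..b₂, ∫ z in a₃..b₃, ∫ w in a₄..b₄, f x y z w
      = ∫ w in a₄..b₄, ∫ z in a₃..b₃, ∫ y in a₂..b₂, ∫ x in a₁..b₁, f x y z w := by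
  have swap := @intervalIntegral_intervalIntegral_swap_of_continuous
  calc _ = ∫ x in a₁..b₁, ∫ y in a₂..b₂, ∫ w in a₄..b₄, ∫ z in a₃..b₃, f x y z w := by
        congr! 4 with x y; refine swap ?_ _ _ _ _; fun_prop
    _ = ∫ x in a₁..b₁, ∫ w in a₄..b₄, ∫ y in a₂..b₂, ∫ z in a₃..b₃, f x y z w := by
        congr! 2 with x; refine swap ?_ _ _ _ _; fun_prop
    _ = ∫ w in a₄..b₄, ∫ x in a₁..b₁, ∫ y in a₂..b₂, ∫ z in a₃..b₃, f x y z w :=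
        swap (by fun_prop) ..
    _ = ∫ w in a₄..b₄, ∫ x in a₁..b₁, ∫ z in a₃..b₃, ∫ y in a₂..b₂, f x y z w := by
        congr! 4 with w x; refine swap ?_ _ _ _ _; fun_prop
    _ = ∫ w in a₄..b₄, ∫ z in a₃..b₃, ∫ x in a₁..b₁, ∫ y in a₂..b₂, f x y z w := by
        congr! 2 with w; refine swap ?_ _ _ _ _; fun_prop
    _ = _ := by
        congr! 4 with w z; refine swap ?_ _ _ _ _; fun_prop

section Primitive

variable {g : ℝ → ℝ}

theorem integral_mul_primitive_pow (hg : Continuous g) (n : ℕ) (c : ℝ) :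
    ∫ t in (0:ℝ)..c, g t * (∫ s in (0:ℝ)..t, g s) ^ n
      = (∫ s in (0:ℝ)..c, g s) ^ (n + 1) / (n + 1) := by
  have hG : ∀ t, HasDerivAt (fun u => ∫ s in (0:ℝ)..u, g s) (g t) t := fun t =>
    intervalIntegral.integral_hasDerivAt_right (hg.intervalIntegrable _ _)
      hg.stronglyMeasurable.stronglyMeasurableAtFilter hg.continuousAt
  have h := intervalIntegral.integral_comp_mul_deriv (a := 0) (b := c) (fun t _ => hG t)
    hg.continuousOn (continuous_pow n)
  simpa [mul_comm, integral_pow] using h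

theorem integral_mul_comp_mul_primitive_pow (hg : Continuous g) (K c : ℝ) (n : ℕ) :
    ∫ x in (0:ℝ)..1, K * (c * (g (c * x) * (∫ s in (0:ℝ)..c * x, g s) ^ n))
      = K * ((∫ s in (0:ℝ)..c, g s) ^ (n + 1) / (n + 1)) := by
  rw [intervalIntegral.integral_const_mul, intervalIntegral.integral_const_mul,
    intervalIntegral.mul_integral_comp_mul_left (f := fun t => g t * (∫ s in (0:ℝ)..t, g s) ^ n),
    mul_zero, mul_one, integral_mul_primitive_pow hg]

theorem integral_scaled_products_eq_pow_four_div (hg : Continuous g) (α : ℝ) :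
    (∫ δ in (0:ℝ)..α, ∫ γ in (0:ℝ)..1, ∫ β in (0:ℝ)..1, ∫ x in (0:ℝ)..1,
      δ ^ 3 * γ ^ 2 * β * g δ * g (δ * γ) * g (δ * γ * β) * g (δ * γ * β * x))
      = (∫ x in (0:ℝ)..α, g x) ^ 4 / 24 := by
  have step := integral_mul_comp_mul_primitive_pow hg
  have hx : ∀ δ γ β : ℝ, ∫ x in (0:ℝ)..1,
      δ ^ 3 * γ ^ 2 * β * g δ * g (δ * γ) * g (δ * γ * β) * g (δ * γ * β * x)
        = δ ^ 2 * γ * g δ * g (δ * γ) * g (δ * γ * β) * ∫ s in (0:ℝ)..δ * γ * β, g s := by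
    intro δ γ β
    convert step (δ ^ 2 * γ * g δ * g (δ * γ) * g (δ * γ * β)) (δ * γ * β) 0 using 2
    · ext; ring
    · simp
  have hβ : ∀ δ γ : ℝ, ∫ β in (0:ℝ)..1,
      δ ^ 2 * γ * g δ * g (δ * γ) * g (δ * γ * β) * ∫ s in (0:ℝ)..δ * γ * β, g s
        = δ * g δ * g (δ * γ) * (∫ s in (0:ℝ)..δ * γ, g s) ^ 2 / 2 := by
    intro δ γ
    convert step (δ * g δ * g (δ * γ)) (δ * γ) 1 using 2
    · ext; ring
    · push_cast; ring
  have hγ : ∀ δ : ℝ, ∫ γ in (0:ℝ)..1,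
      δ * g δ * g (δ * γ) * (∫ s in (0:ℝ)..δ * γ, g s) ^ 2 / 2
        = g δ * (∫ s in (0:ℝ)..δ, g s) ^ 3 / 6 := by
    intro δ
    convert step (g δ / 2) δ 2 using 2
    · ext; ring
    · push_cast; ring
  have hδ : ∫ δ in (0:ℝ)..α, g δ * (∫ s in (0:ℝ)..δ, g s) ^ 3 / 6
      = (∫ x in (0:ℝ)..α, g x) ^ 4 / 24 := by
    rw [intervalIntegral.integral_div, integral_mul_primitive_pow hg]
    push_cast; ring
  simp only [hx, hβ, hγ, hδ]

theorem integral_pow_four_eq_of_continuous (hg : Continuous g) (α : ℝ) :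
    (∫ x in (0:ℝ)..α, g x) ^ 4
      = 24 * ∫ x in (0:ℝ)..1, ∫ β in (0:ℝ)..1, ∫ γ in (0:ℝ)..1, ∫ δ in (0:ℝ)..α,
          δ ^ 3 * γ ^ 2 * β * g δ * g (δ * γ) * g (δ * γ * β) * g (δ * γ * β * x) := by
  rw [intervalIntegral_reverse_four (by fun_prop), integral_scaled_products_eq_pow_four_div hg]
  ring

end Primitive

theorem mul_mem_Icc_of_mem_uIcc_zero_one {a u v : ℝ} (hu : u ∈ Icc 0 a) (hv : v ∈ uIcc 0 1) :
    u * v ∈ Icc 0 a := by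
  rw [uIcc_of_le zero_le_one] at hv
  exact ⟨mul_nonneg hu.1 hv.1, (mul_le_of_le_one_right hu.1 hv.2).trans hu.2⟩

theorem fourth_power_formula (α : ℝ) (hα : 0 < α) (g : ℝ → ℝ)
    (hg : ContinuousOn g (Set.Icc 0 α)) :
    (∫ x in (0:ℝ)..α, g x) ^ 4
      = 24 * ∫ x in (0:ℝ)..1, ∫ β in (0:ℝ)..1, ∫ γ in (0:ℝ)..1, ∫ δ in (0:ℝ)..α,
          δ ^ 3 * γ ^ 2 * β * g δ * g (δ * γ) * g (δ * γ * β) * g (δ * γ * β * x) := by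
  set g' := IccExtend hα.le ((Icc 0 α).domRestrict g)
  have hg' : Continuous g' := hg.domRestrict.Icc_extend'
  have hg'g : EqOn g' g (Icc 0 α) := fun t ht => IccExtend_of_mem _ _ ht
  have hIcc : uIcc 0 α = Icc 0 α := uIcc_of_le hα.le
  have hmem := @mul_mem_Icc_of_mem_uIcc_zero_one α
  calc (∫ x in (0:ℝ)..α, g x) ^ 4 = (∫ x in (0:ℝ)..α, g' x) ^ 4 := by
        rw [intervalIntegral.integral_congr (hIcc ▸ hg'g.symm)]
    _ = _ := integral_pow_four_eq_of_continuous hg' α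
    _ = _ := by
        congr 1
        refine intervalIntegral.integral_congr fun x hx => intervalIntegral.integral_congr
          fun β hβ => intervalIntegral.integral_congr fun γ hγ =>
          intervalIntegral.integral_congr fun δ hδ => ?_
        rw [hIcc] at hδ
        simp only [hg'g hδ, hg'g (hmem hδ hγ), hg'g (hmem (hmem hδ hγ) hβ),
          hg'g (hmem (hmem (hmem hδ hγ) hβ) hx)]
end

section
/- Identity (2): 12 · ∫₀¹ ∫₀¹ ∫₀¹ (γ² · β) / (1 + γ² + γ²·β² + γ²·β²·x²)² dγ dβ dx = π²/16. -/
open Real Set intervalIntegral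

/-! With `s = 1 + (1 + x²) β²` the integrand is `β γ² / (1 + s γ²)²`, whose `γ`-integral is
`-g'(s)` for `g(s) = arctan √s / √s`; the `β`-integral then telescopes to
`(g 1 - g (2 + x²)) / (2 (1 + x²))`. Using `arctan a = π/2 - arctan (1/a)`, what remains is
`∫₀¹ arctan (1/√(2+x²)) / ((1+x²) √(2+x²)) dx`, a variant of Ahmed's integral. Integrating
`1 / ((1 + x²)(2 + x² + t²))` over the unit square first in `t` gives that integral, first in `x`
(partial fractions) gives `π²/16` minus it, so it equals `π²/32`. -/

lemma integral_one_div_add_sq {c : ℝ} (hc : 0 < c) :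
    ∫ t in (0:ℝ)..1, 1 / (c + t ^ 2) = arctan (1 / √c) / √c := by
  have hsqrt : 0 < √c := sqrt_pos.mpr hc
  have hderiv (t : ℝ) : HasDerivAt (fun t => arctan (t / √c) / √c) (1 / (c + t ^ 2)) t := by
    refine (((hasDerivAt_id t).div_const √c).arctan.div_const √c).congr_deriv ?_
    field_simp
    rw [sq_sqrt hc.le, id]
  rw [integral_eq_sub_of_hasDerivAt (fun t _ => hderiv t)
    ((by fun_prop (disch := intro; positivity) : Continuous _).intervalIntegrable 0 1)]
  simp

lemma integral_sq_div_one_add_mul_sq_sq {s : ℝ} (hs : 0 < s) :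
    ∫ γ in (0:ℝ)..1, γ ^ 2 / (1 + s * γ ^ 2) ^ 2
      = arctan √s / (2 * s * √s) - 1 / (2 * s * (1 + s)) := by
  have hsqrt : 0 < √s := sqrt_pos.mpr hs
  have hderiv (γ : ℝ) :
      HasDerivAt (fun γ => arctan (√s * γ) / (2 * s * √s) - γ / (2 * s * (1 + s * γ ^ 2)))
        (γ ^ 2 / (1 + s * γ ^ 2) ^ 2) γ := by
    have hden : 0 < 1 + s * γ ^ 2 := by positivity
    refine ((((hasDerivAt_id γ).const_mul √s).arctan.div_const _).sub
      ((hasDerivAt_id γ).div (((hasDerivAt_pow 2 γ).const_mul s).const_add 1 |>.const_mul (2 * s))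
        (by positivity))).congr_deriv ?_
    simp only [id, mul_pow, sq_sqrt hs.le]
    field_simp
    ring
  rw [integral_eq_sub_of_hasDerivAt (fun γ _ => hderiv γ)
    ((by fun_prop (disch := intro; positivity) : Continuous _).intervalIntegrable 0 1)]
  simp

lemma hasDerivAt_arctan_sqrt_div_sqrt {s : ℝ} (hs : 0 < s) :
    HasDerivAt (fun s => arctan √s / √s) (1 / (2 * s * (1 + s)) - arctan √s / (2 * s * √s)) s := by
  have hsqrt : 0 < √s := sqrt_pos.mpr hs
  refine ((hasDerivAt_sqrt hs.ne').arctan.div (hasDerivAt_sqrt hs.ne') hsqrt.ne').congr_deriv ?_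
  rw [sq_sqrt hs.le]
  field_simp

lemma integral_mul_deriv_comp_one_add_mul_sq {g g' : ℝ → ℝ} {c : ℝ} (hc : 0 < c)
    (hg : ∀ s, 0 < s → HasDerivAt g (g' s) s) (hg' : ContinuousOn g' (Ioi 0)) :
    ∫ β in (0:ℝ)..1, β * g' (1 + c * β ^ 2) = (g (1 + c) - g 1) / (2 * c) := by
  have hpos (β : ℝ) : 0 < 1 + c * β ^ 2 := by positivity
  have hderiv (β : ℝ) :
      HasDerivAt (fun β => g (1 + c * β ^ 2) / (2 * c)) (β * g' (1 + c * β ^ 2)) β := by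
    refine (((hg _ (hpos β)).comp β
      (((hasDerivAt_pow 2 β).const_mul c).const_add 1)).div_const (2 * c)).congr_deriv ?_
    field_simp
    ring
  have hcont : Continuous fun β => β * g' (1 + c * β ^ 2) :=
    continuous_id.mul (hg'.comp_continuous (by fun_prop) hpos)
  rw [integral_eq_sub_of_hasDerivAt (fun β _ => hderiv β) (hcont.intervalIntegrable 0 1)]
  norm_num [sub_div]

lemma integral_one_div_one_add_sq_mul_sqrt_two_add_sq :
    ∫ x in (0:ℝ)..1, 1 / ((1 + x ^ 2) * √(2 + x ^ 2)) = π / 6 := by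
  have hderiv (x : ℝ) :
      HasDerivAt (fun x => arctan (x / √(2 + x ^ 2))) (1 / ((1 + x ^ 2) * √(2 + x ^ 2))) x := by
    have hq : 0 < 2 + x ^ 2 := by positivity
    have hr : 0 < √(2 + x ^ 2) := sqrt_pos.mpr hq
    refine ((hasDerivAt_id x).div (((hasDerivAt_pow 2 x).const_add 2).sqrt hq.ne')
      hr.ne').arctan.congr_deriv ?_
    simp only [id, Pi.div_apply, div_pow, sq_sqrt hq.le]
    field_simp
    rw [sq_sqrt hq.le]
    ring
  rw [integral_eq_sub_of_hasDerivAt (fun x _ => hderiv x)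
    ((by fun_prop (disch := intro; positivity) : Continuous _).intervalIntegrable 0 1)]
  norm_num

lemma integral_one_div_one_add_sq_mul_arctan_inv_sqrt_div_sqrt :
    ∫ x in (0:ℝ)..1, 1 / (1 + x ^ 2) * (arctan (1 / √(2 + x ^ 2)) / √(2 + x ^ 2)) = π ^ 2 / 32 := by
  set φ : ℝ → ℝ := fun x => arctan (1 / √(2 + x ^ 2)) / √(2 + x ^ 2)
  set f : ℝ → ℝ → ℝ := fun x t => 1 / (1 + x ^ 2) * (1 / (2 + x ^ 2 + t ^ 2))
  have hf : Continuous f.uncurry := by fun_prop (disch := intro; positivity)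
  have hφ : Continuous fun x => 1 / (1 + x ^ 2) * φ x := by fun_prop (disch := intro; positivity)
  have hx (x : ℝ) : ∫ t in (0:ℝ)..1, f x t = 1 / (1 + x ^ 2) * φ x := by
    rw [integral_const_mul, integral_one_div_add_sq (by positivity)]
  have ht (t : ℝ) : ∫ x in (0:ℝ)..1, f x t = π / 4 * (1 / (1 + t ^ 2)) - 1 / (1 + t ^ 2) * φ t := by
    have hsplit : ∀ x ∈ uIcc (0:ℝ) 1,
        f x t = 1 / (1 + t ^ 2) * (1 / (1 + x ^ 2) - 1 / (2 + t ^ 2 + x ^ 2)) := by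
      intro x _
      simp only [f]
      field_simp
      ring
    rw [integral_congr hsplit, integral_const_mul, integral_sub
      ((by fun_prop (disch := intro; positivity) : Continuous _).intervalIntegrable 0 1)
      ((by fun_prop (disch := intro; positivity) : Continuous _).intervalIntegrable 0 1),
      integral_one_div_one_add_sq, integral_one_div_add_sq (by positivity)]
    simp only [arctan_one, arctan_zero, φ]
    ring
  have hswap : ∫ x in (0:ℝ)..1, ∫ t in (0:ℝ)..1, f x t = ∫ t in (0:ℝ)..1, ∫ x in (0:ℝ)..1, f x t :=
    MeasureTheory.intervalIntegral_intervalIntegral_swap <|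
      (hf.continuousOn.integrableOn_compact (isCompact_uIcc.prod isCompact_uIcc)).mono_set
        (prod_mono uIoc_subset_uIcc uIoc_subset_uIcc)
  change ∫ x in (0:ℝ)..1, 1 / (1 + x ^ 2) * φ x = _
  simp only [hx, ht] at hswap
  rw [integral_sub
    ((by fun_prop (disch := intro; positivity) : Continuous _).intervalIntegrable 0 1)
    (hφ.intervalIntegrable 0 1), integral_const_mul, integral_one_div_one_add_sq] at hswap
  simp only [arctan_one, arctan_zero] at hswap
  linarith

lemma integral_pi_div_four_sub_arctan_sqrt_div_sqrt :
    ∫ x in (0:ℝ)..1, (π / 4 - arctan √(2 + x ^ 2) / √(2 + x ^ 2)) / (2 * (1 + x ^ 2))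
      = π ^ 2 / 192 := by
  have hsplit : ∀ x ∈ uIcc (0:ℝ) 1,
      (π / 4 - arctan √(2 + x ^ 2) / √(2 + x ^ 2)) / (2 * (1 + x ^ 2))
        = π / 8 * (1 / (1 + x ^ 2)) - π / 4 * (1 / ((1 + x ^ 2) * √(2 + x ^ 2)))
          + 1 / 2 * (1 / (1 + x ^ 2) * (arctan (1 / √(2 + x ^ 2)) / √(2 + x ^ 2))) := by
    intro x _
    have hr : 0 < √(2 + x ^ 2) := sqrt_pos.mpr (by positivity)
    rw [one_div √(2 + x ^ 2), arctan_inv_of_pos hr]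
    field_simp
    ring
  rw [integral_congr hsplit, integral_add, integral_sub, integral_const_mul, integral_const_mul,
    integral_const_mul, integral_one_div_one_add_sq,
    integral_one_div_one_add_sq_mul_sqrt_two_add_sq, integral_one_div_one_add_sq_mul_arctan_inv_sqrt_div_sqrt, arctan_one, arctan_zero]
  · ring
  all_goals
    apply Continuous.intervalIntegrable
    fun_prop (disch := intro; positivity)

theorem identity_two :
    12 * ∫ x in (0:ℝ)..1, ∫ β in (0:ℝ)..1, ∫ γ in (0:ℝ)..1,
        γ ^ 2 * β / (1 + γ ^ 2 + γ ^ 2 * β ^ 2 + γ ^ 2 * β ^ 2 * x ^ 2) ^ 2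
      = Real.pi ^ 2 / 16 := by
  set g' : ℝ → ℝ := fun s => 1 / (2 * s * (1 + s)) - arctan √s / (2 * s * √s)
  have hγ (x β : ℝ) :
      ∫ γ in (0:ℝ)..1, γ ^ 2 * β / (1 + γ ^ 2 + γ ^ 2 * β ^ 2 + γ ^ 2 * β ^ 2 * x ^ 2) ^ 2
        = β * -g' (1 + (1 + x ^ 2) * β ^ 2) := by
    have hs : 0 < 1 + (1 + x ^ 2) * β ^ 2 := by positivity
    have hfactor (γ : ℝ) : γ ^ 2 * β / (1 + γ ^ 2 + γ ^ 2 * β ^ 2 + γ ^ 2 * β ^ 2 * x ^ 2) ^ 2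
        = β * (γ ^ 2 / (1 + (1 + (1 + x ^ 2) * β ^ 2) * γ ^ 2) ^ 2) := by ring
    simp only [hfactor, integral_const_mul, integral_sq_div_one_add_mul_sq_sq hs, g']
    ring
  have hβ (x : ℝ) :
      ∫ β in (0:ℝ)..1, ∫ γ in (0:ℝ)..1,
          γ ^ 2 * β / (1 + γ ^ 2 + γ ^ 2 * β ^ 2 + γ ^ 2 * β ^ 2 * x ^ 2) ^ 2
        = (π / 4 - arctan √(2 + x ^ 2) / √(2 + x ^ 2)) / (2 * (1 + x ^ 2)) := by
    simp only [hγ]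
    rw [integral_mul_deriv_comp_one_add_mul_sq (g := fun s => -(arctan √s / √s)) (by positivity)
      (fun s hs => (hasDerivAt_arctan_sqrt_div_sqrt hs).neg)
      (by fun_prop (disch := intro s hs; simp only [mem_Ioi] at hs; positivity))]
    rw [show (1:ℝ) + (1 + x ^ 2) = 2 + x ^ 2 by ring, sqrt_one, div_one, arctan_one]
    ring
  rw [integral_congr (fun x _ => hβ x), integral_pi_div_four_sub_arctan_sqrt_div_sqrt]
  ring
end

section
/- Identity between the Probability integral and Ahmed's integral: 24 · ∫₀¹ ∫₀¹ ∫₀¹ (∫₀^∞ δ³ · γ² · β · e^{-δ²·(1 + γ² + γ²·β² + γ²·β²·x²)} dδ) dγ dβ dx = 6 · (π²/16) − 6 · ∫₀¹ arctan(√(2 + x²)) / ((1 + x²)·√(2 + x²)) dx. -/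
/-!
Integrate from the inside out. The δ-integral is a Gamma integral,
`∫₀^∞ δ³ e^{-A δ²} dδ = 1 / (2 A²)`, where `A = 1 + t² γ²`
with `t = √(1 + (1 + x²) β²)`; then the γ-integral is elementary,
`∫₀¹ γ² / (1 + t² γ²)² dγ = (arctan t / t³ - 1 / (t² (1 + t²))) / 2`.
Since `dt/dβ = (1 + x²) β / t`, the resulting β-integrand is `-1 / (1 + x²)` times the
β-derivative of `arctan t / t`, so the β-integral telescopes to
`(π/4 - arctan √(2 + x²) / √(2 + x²)) / (1 + x²)`,
and `∫₀¹ dx / (1 + x²) = π/4` gives the `π² / 16` term.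
-/

open Real Set MeasureTheory

theorem integral_Ioi_pow_three_mul_exp_neg_sq_mul {a : ℝ} (ha : 0 < a) :
    ∫ δ in Ioi (0:ℝ), δ ^ 3 * exp (-δ ^ 2 * a) = 1 / (2 * a ^ 2) := by
  have h := integral_rpow_mul_exp_neg_mul_rpow (p := 2) (q := 3) two_pos (by norm_num) ha
  norm_num [Real.Gamma_two] at h
  simp_rw [neg_mul, mul_comm _ a]
  rw [h]
  ring

theorem integral_sq_div_one_add_sq_mul_sq_sq {s : ℝ} (hs : s ≠ 0) :
    ∫ γ in (0:ℝ)..1, γ ^ 2 / (1 + s ^ 2 * γ ^ 2) ^ 2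
      = (arctan s / s ^ 3 - 1 / (s ^ 2 * (1 + s ^ 2))) / 2 := by
  have hderiv : ∀ γ : ℝ, HasDerivAt
      (fun γ => arctan (s * γ) / (2 * s ^ 3) - γ / (2 * s ^ 2 * (1 + s ^ 2 * γ ^ 2)))
      (γ ^ 2 / (1 + s ^ 2 * γ ^ 2) ^ 2) γ := by
    intro γ
    have h := (((hasDerivAt_id' γ).const_mul s).arctan.div_const (2 * s ^ 3)).sub
      ((hasDerivAt_id' γ).div ((((hasDerivAt_pow 2 γ).const_mul (s ^ 2)).const_add 1).const_mul
        (2 * s ^ 2)) (by positivity))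
    refine h.congr_deriv ?_
    field_simp
    ring
  rw [intervalIntegral.integral_eq_sub_of_hasDerivAt (fun γ _ => hderiv γ)
    (by apply Continuous.intervalIntegrable; fun_prop (disch := exact fun x => by positivity))]
  simp only [mul_zero, mul_one, arctan_zero]
  field_simp
  ring

theorem hasDerivAt_arctan_div_self {t : ℝ} (ht : t ≠ 0) :
    HasDerivAt (fun t => arctan t / t) (1 / (t * (1 + t ^ 2)) - arctan t / t ^ 2) t := by
  refine ((hasDerivAt_arctan t).div (hasDerivAt_id' t) ht).congr_deriv ?_
  field_simp

theorem integral_mul_arctan_sqrt_one_add_mul_sq {k : ℝ} (hk : 0 < k) :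
    ∫ β in (0:ℝ)..1, β * (arctan √(1 + k * β ^ 2) / √(1 + k * β ^ 2) ^ 3
        - 1 / (√(1 + k * β ^ 2) ^ 2 * (1 + √(1 + k * β ^ 2) ^ 2)))
      = (π / 4 - arctan √(1 + k) / √(1 + k)) / k := by
  have hderiv : ∀ β : ℝ,
      HasDerivAt (fun β => -(arctan √(1 + k * β ^ 2) / √(1 + k * β ^ 2)) / k)
      (β * (arctan √(1 + k * β ^ 2) / √(1 + k * β ^ 2) ^ 3
        - 1 / (√(1 + k * β ^ 2) ^ 2 * (1 + √(1 + k * β ^ 2) ^ 2)))) β := by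
    intro β
    have hpos : 0 < 1 + k * β ^ 2 := by positivity
    have ht : 0 < √(1 + k * β ^ 2) := sqrt_pos.2 hpos
    have h := ((hasDerivAt_arctan_div_self ht.ne').comp β
      ((((hasDerivAt_pow 2 β).const_mul k).const_add 1).sqrt hpos.ne')).neg.div_const k
    refine h.congr_deriv ?_
    field_simp
    ring
  rw [intervalIntegral.integral_eq_sub_of_hasDerivAt (fun β _ => hderiv β)
    (by apply Continuous.intervalIntegrable; fun_prop (disch := exact fun x => by positivity))]
  norm_num [arctan_one]
  ring

theorem probability_ahmed_link :
    24 * (∫ x in (0:ℝ)..1, ∫ β in (0:ℝ)..1, ∫ γ in (0:ℝ)..1,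
        ∫ δ in Set.Ioi (0:ℝ),
          δ ^ 3 * γ ^ 2 * β *
            Real.exp (-δ ^ 2 * (1 + γ ^ 2 + γ ^ 2 * β ^ 2 + γ ^ 2 * β ^ 2 * x ^ 2)))
      = 6 * (Real.pi ^ 2 / 16)
        - 6 * ∫ x in (0:ℝ)..1,
            Real.arctan (Real.sqrt (2 + x ^ 2)) / ((1 + x ^ 2) * Real.sqrt (2 + x ^ 2)) := by
  have hδ : ∀ x β γ : ℝ, ∫ δ in Ioi (0:ℝ),
      δ ^ 3 * γ ^ 2 * β * exp (-δ ^ 2 * (1 + γ ^ 2 + γ ^ 2 * β ^ 2 + γ ^ 2 * β ^ 2 * x ^ 2))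
        = β / 2 * (γ ^ 2 / (1 + √(1 + (1 + x ^ 2) * β ^ 2) ^ 2 * γ ^ 2) ^ 2) := by
    intro x β γ
    have hs : √(1 + (1 + x ^ 2) * β ^ 2) ^ 2 = 1 + (1 + x ^ 2) * β ^ 2 :=
      sq_sqrt (by positivity)
    simp_rw [mul_comm _ (exp _), ← mul_assoc, mul_comm (exp _)]
    rw [integral_mul_const, integral_mul_const,
      integral_Ioi_pow_three_mul_exp_neg_sq_mul (by positivity), hs]
    field_simp
    ring
  have hγ : ∀ x β : ℝ,
      ∫ γ in (0:ℝ)..1, β / 2 * (γ ^ 2 / (1 + √(1 + (1 + x ^ 2) * β ^ 2) ^ 2 * γ ^ 2) ^ 2)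
      = 1 / 4 * (β * (arctan √(1 + (1 + x ^ 2) * β ^ 2)
          / √(1 + (1 + x ^ 2) * β ^ 2) ^ 3
        - 1 / (√(1 + (1 + x ^ 2) * β ^ 2) ^ 2 * (1 + √(1 + (1 + x ^ 2) * β ^ 2) ^ 2)))) := by
    intro x β
    rw [intervalIntegral.integral_const_mul,
      integral_sq_div_one_add_sq_mul_sq_sq (sqrt_pos.2 (by positivity)).ne']
    ring
  have hβ : ∀ x : ℝ,
      ∫ β in (0:ℝ)..1, 1 / 4 * (β * (arctan √(1 + (1 + x ^ 2) * β ^ 2)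
          / √(1 + (1 + x ^ 2) * β ^ 2) ^ 3
        - 1 / (√(1 + (1 + x ^ 2) * β ^ 2) ^ 2 * (1 + √(1 + (1 + x ^ 2) * β ^ 2) ^ 2))))
      = π / 16 * (1 + x ^ 2)⁻¹
        - 1 / 4 * (arctan √(2 + x ^ 2) / ((1 + x ^ 2) * √(2 + x ^ 2))) := by
    intro x
    rw [intervalIntegral.integral_const_mul,
      integral_mul_arctan_sqrt_one_add_mul_sq (by positivity),
      show 1 + (1 + x ^ 2) = 2 + x ^ 2 by ring]
    field_simp
    ring
  simp only [hδ, hγ, hβ]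
  rw [intervalIntegral.integral_sub, intervalIntegral.integral_const_mul,
    intervalIntegral.integral_const_mul, integral_inv_one_add_sq, arctan_one, arctan_zero]
  · ring
  all_goals
    apply Continuous.intervalIntegrable
    fun_prop (disch := exact fun x => by positivity)
end
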